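/- Let E be a Banach space, V ⊆ E open, and Z : ℝ × V → E a map which is measurable in t, satisfies ‖Z(t,x)‖ ≤ kc for all (t,x) ∈ J × V, and is Lipschitz in x with constant kc uniformly in t (where k, c > 0). Fix x₀ ∈ V, r > 0 with the closed ball B̄(x₀, 2r) ⊆ V, and T₀ < r/(kc). Then for every x ∈ B(x₀, r − kcT₀) there exists a unique continuous curve f : [t₀ − T₀, t₀ + T₀] → V with f(t) = x + ∫_{t₀}^t Z(s, f(s)) ds for all t. -/

import Mathlib

/-!
Carathéodory's condition (measurable in `t`, continuous in `x`) makes `t ↦ Z t (γ t)` a.e.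
strongly measurable for every continuous curve `γ` in the ball, as a pointwise limit of its
compositions with simple approximations of `γ`; being bounded by `k c`, it is integrable. Hence
the Picard operator `γ ↦ x + ∫ Z s (γ s)` maps the complete space of `k c`-Lipschitz curves
starting at `x` to itself, and the Lipschitz bound in `x` makes its `n`-th iterate Lipschitz with
constant `(k c T₀)ⁿ / n!`, a contraction for large `n`. This gives existence, and uniqueness among
curves in the ball; a solution with values in `V` stays in `closedBall x (k c T₀)` since its
integrand is bounded by `k c`.
-/

open Set Metric Filter Function Topology MeasureTheory

section Caratheodory

variable {α E F : Type*} [MeasurableSpace α] {μ : Measure α} [TopologicalSpace F]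
  {Z : α → E → F} {s : Set E}

theorem aestronglyMeasurable_comp_simpleFunc [AddCommMonoid F] [ContinuousAdd F]
    (hZ : ∀ y ∈ s, AEStronglyMeasurable (Z · y) μ) (φ : SimpleFunc α E) (hφ : ∀ t, φ t ∈ s) :
    AEStronglyMeasurable (fun t ↦ Z t (φ t)) μ := by
  have hsum : (fun t ↦ Z t (φ t)) =
      fun t ↦ ∑ y ∈ φ.range, (φ ⁻¹' {y}).indicator (Z · y) t := by
    funext t
    rw [Finset.sum_eq_single_of_mem (φ t) (φ.mem_range_self t)
      fun y _ hy ↦ indicator_of_notMem (fun h ↦ hy h.symm) _]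
    exact (indicator_of_mem rfl _).symm
  rw [hsum]
  refine Finset.aestronglyMeasurable_fun_sum _ fun y hy ↦ ?_
  obtain ⟨t, rfl⟩ := SimpleFunc.mem_range.mp hy
  exact (hZ _ (hφ t)).indicator (φ.measurableSet_fiber _)

theorem aestronglyMeasurable_comp_of_continuousOn [PseudoEMetricSpace E] [AddCommMonoid F]
    [ContinuousAdd F] [TopologicalSpace.PseudoMetrizableSpace F]
    (hZ : ∀ y ∈ s, AEStronglyMeasurable (Z · y) μ) (hcont : ∀ᵐ t ∂μ, ContinuousOn (Z t) s)
    {h : α → E} (hh : StronglyMeasurable h) (hs : ∀ t, h t ∈ s) :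
    AEStronglyMeasurable (fun t ↦ Z t (h t)) μ := by
  rcases isEmpty_or_nonempty α with hα | ⟨⟨t₀⟩⟩
  · exact (Measure.eq_zero_of_isEmpty μ) ▸ aestronglyMeasurable_zero_measure _
  borelize E
  have := hh.isSeparable_range.separableSpace
  -- the approximants take values in `range h ⊆ s`, where `Z t` is continuous
  let φ := SimpleFunc.approxOn h hh.measurable (range h) (h t₀) (mem_range_self t₀)
  have hφs (n : ℕ) (t : α) : φ n t ∈ s := by
    obtain ⟨u, hu⟩ := SimpleFunc.approxOn_mem hh.measurable (mem_range_self (f := h) t₀) n t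
    exact hu ▸ hs u
  refine aestronglyMeasurable_of_tendsto_ae atTop
    (fun n ↦ aestronglyMeasurable_comp_simpleFunc hZ (φ n) (hφs n)) ?_
  filter_upwards [hcont] with t ht
  exact (ht (h t) (hs t)).tendsto.comp <| tendsto_nhdsWithin_iff.2
    ⟨SimpleFunc.tendsto_approxOn hh.measurable _ (subset_closure (mem_range_self t)),
      Eventually.of_forall (hφs · t)⟩

end Caratheodory

open ODE
open scoped NNReal Nat

lemma picard_congr {E : Type*} [NormedAddCommGroup E] [NormedSpace ℝ E] {f : ℝ → E → E}
    {t₀ t : ℝ} {x₀ : E} {γ₁ γ₂ : ℝ → E} (h : EqOn γ₁ γ₂ (uIcc t₀ t)) :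
    picard f t₀ x₀ γ₁ t = picard f t₀ x₀ γ₂ t := by
  simp only [picard_apply]
  congr 1
  exact intervalIntegral.integral_congr fun τ hτ ↦ by rw [h hτ]

lemma mapsTo_closedBall_of_eq_picard {E : Type*} [NormedAddCommGroup E] [NormedSpace ℝ E]
    {f : ℝ → E → E} {t₀ T C : ℝ} {x₀ : E} {γ : ℝ → E}
    (hbound : ∀ t ∈ Icc (t₀ - T) (t₀ + T), ‖f t (γ t)‖ ≤ C)
    (heq : ∀ t ∈ Icc (t₀ - T) (t₀ + T), γ t = picard f t₀ x₀ γ t) :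
    MapsTo γ (Icc (t₀ - T) (t₀ + T)) (closedBall x₀ (C * T)) := by
  intro t ht
  have ht₀ : t₀ ∈ Icc (t₀ - T) (t₀ + T) := by constructor <;> linarith [ht.1, ht.2]
  have hC : 0 ≤ C := (norm_nonneg _).trans (hbound t ht)
  rw [mem_closedBall, heq t ht, picard_apply, dist_self_add_left]
  calc ‖∫ τ in t₀..t, f τ (γ τ)‖ ≤ C * |t - t₀| :=
        intervalIntegral.norm_integral_le_of_norm_le_const fun τ hτ ↦
          hbound τ (uIcc_subset_Icc ht₀ ht (uIoc_subset_uIcc hτ))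
    _ ≤ C * T := by
        gcongr
        exact abs_sub_le_iff.2 ⟨by linarith [ht.2], by linarith [ht.1]⟩

section

variable {E : Type*} [NormedAddCommGroup E]

/-- The hypotheses of `IsPicardLindelof` for the initial point `x₀` itself, with continuity in
time weakened to measurability. -/
structure IsCaratheodory (f : ℝ → E → E) {tmin tmax : ℝ} (t₀ : Icc tmin tmax) (x₀ : E)
    (a L K : ℝ≥0) : Prop where
  lipschitzOnWith : ∀ t ∈ Icc tmin tmax, LipschitzOnWith K (f t) (closedBall x₀ a)
  aestronglyMeasurable : ∀ x ∈ closedBall x₀ a,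
    AEStronglyMeasurable (f · x) (volume.restrict (Icc tmin tmax))
  norm_le : ∀ t ∈ Icc tmin tmax, ∀ x ∈ closedBall x₀ a, ‖f t x‖ ≤ L
  mul_max_le : L * max (tmax - t₀) (t₀ - tmin) ≤ a

namespace IsCaratheodory

variable {f : ℝ → E → E} {tmin tmax : ℝ} {t₀ : Icc tmin tmax} {x₀ : E} {a L K : ℝ≥0}
  {γ : ℝ → E}

lemma apply_mem_closedBall (hf : IsCaratheodory f t₀ x₀ a L K) (α : FunSpace t₀ x₀ 0 L)
    (t : Icc tmin tmax) : α t ∈ closedBall x₀ a :=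
  α.mem_closedBall (by simpa using hf.mul_max_le)

lemma mapsTo_compProj (hf : IsCaratheodory f t₀ x₀ a L K) (α : FunSpace t₀ x₀ 0 L) :
    MapsTo α.compProj (Icc tmin tmax) (closedBall x₀ a) :=
  fun _ _ ↦ hf.apply_mem_closedBall α _

lemma aestronglyMeasurable_comp (hf : IsCaratheodory f t₀ x₀ a L K)
    (hγ : ContinuousOn γ (Icc tmin tmax)) (hmem : MapsTo γ (Icc tmin tmax) (closedBall x₀ a)) :
    AEStronglyMeasurable (fun t ↦ f t (γ t)) (volume.restrict (Icc tmin tmax)) := by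
  have hle : tmin ≤ tmax := t₀.2.1.trans t₀.2.2
  have hγπ : Continuous fun t ↦ γ (projIcc tmin tmax hle t) :=
    hγ.comp_continuous (continuous_subtype_val.comp continuous_projIcc) fun t ↦ (projIcc _ _ _ t).2
  refine (aestronglyMeasurable_comp_of_continuousOn hf.aestronglyMeasurable
    (ae_restrict_of_forall_mem measurableSet_Icc fun t ht ↦ (hf.lipschitzOnWith t ht).continuousOn)
    hγπ.stronglyMeasurable fun t ↦ hmem (projIcc _ _ _ t).2).congr ?_
  filter_upwards [ae_restrict_mem measurableSet_Icc] with t ht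
  rw [projIcc_of_mem hle ht]

lemma intervalIntegrable_comp (hf : IsCaratheodory f t₀ x₀ a L K)
    (hγ : ContinuousOn γ (Icc tmin tmax)) (hmem : MapsTo γ (Icc tmin tmax) (closedBall x₀ a))
    {t₁ t₂ : ℝ} (ht₁ : t₁ ∈ Icc tmin tmax) (ht₂ : t₂ ∈ Icc tmin tmax) :
    IntervalIntegrable (fun t ↦ f t (γ t)) volume t₁ t₂ := by
  have hint : IntegrableOn (fun t ↦ f t (γ t)) (Icc tmin tmax) :=
    Integrable.of_bound (hf.aestronglyMeasurable_comp hγ hmem) L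
      (ae_restrict_of_forall_mem measurableSet_Icc fun t ht ↦ hf.norm_le t ht _ (hmem ht))
  exact (hint.mono_set (uIcc_subset_Icc ht₁ ht₂)).intervalIntegrable

variable [NormedSpace ℝ E]

lemma lipschitzWith_picard (hf : IsCaratheodory f t₀ x₀ a L K)
    (hγ : ContinuousOn γ (Icc tmin tmax)) (hmem : MapsTo γ (Icc tmin tmax) (closedBall x₀ a)) :
    LipschitzWith L fun t : Icc tmin tmax ↦ picard f t₀ x₀ γ t :=
  LipschitzWith.of_dist_le_mul fun t₁ t₂ ↦ by
    rw [dist_eq_norm, picard_apply, picard_apply, add_sub_add_left_eq_sub,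
      intervalIntegral.integral_interval_sub_left (hf.intervalIntegrable_comp hγ hmem t₀.2 t₁.2)
        (hf.intervalIntegrable_comp hγ hmem t₀.2 t₂.2), Subtype.dist_eq, Real.dist_eq]
    refine intervalIntegral.norm_integral_le_of_norm_le_const fun t ht ↦ ?_
    have ht : t ∈ Icc tmin tmax := uIcc_subset_Icc t₂.2 t₁.2 (uIoc_subset_uIcc ht)
    exact hf.norm_le t ht _ (hmem ht)

noncomputable def next (hf : IsCaratheodory f t₀ x₀ a L K) (α : FunSpace t₀ x₀ 0 L) :
    FunSpace t₀ x₀ 0 L where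
  toFun t := picard f t₀ x₀ α.compProj t
  lipschitzWith := hf.lipschitzWith_picard α.continuous_compProj.continuousOn (hf.mapsTo_compProj α)
  mem_closedBall₀ := by simp

lemma next_apply (hf : IsCaratheodory f t₀ x₀ a L K) (α : FunSpace t₀ x₀ 0 L)
    (t : Icc tmin tmax) : hf.next α t = picard f t₀ x₀ α.compProj t := rfl

lemma dist_iterate_next_apply_le (hf : IsCaratheodory f t₀ x₀ a L K)
    (α β : FunSpace t₀ x₀ 0 L) (n : ℕ) (t : Icc tmin tmax) :
    dist (hf.next^[n] α t) (hf.next^[n] β t) ≤ (K * |t.1 - t₀.1|) ^ n / n ! * dist α β := by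
  induction n generalizing t with
  | zero =>
    rw [pow_zero, Nat.factorial_zero, Nat.cast_one, div_one, one_mul]
    exact ContinuousMap.dist_apply_le_dist (f := α.toContinuousMap) (g := β.toContinuousMap) t
  | succ n ih =>
    have hint (γ : FunSpace t₀ x₀ 0 L) :
        IntervalIntegrable (fun τ ↦ f τ (γ.compProj τ)) volume t₀ t :=
      hf.intervalIntegrable_comp γ.continuous_compProj.continuousOn (hf.mapsTo_compProj γ) t₀.2 t.2
    rw [iterate_succ_apply', iterate_succ_apply', dist_eq_norm, next_apply, next_apply,
      picard_apply, picard_apply, add_sub_add_left_eq_sub,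
      ← intervalIntegral.integral_sub (hint _) (hint _)]
    calc
      _ ≤ ∫ τ in uIoc t₀.1 t.1, K * ((K * |τ - t₀|) ^ n / n ! * dist α β) := by
        rw [intervalIntegral.norm_intervalIntegral_eq]
        refine norm_integral_le_of_norm_le (Continuous.integrableOn_uIoc (by fun_prop))
          (ae_restrict_mem measurableSet_Ioc |>.mono fun τ hτ ↦ ?_)
        have hτ : τ ∈ Icc tmin tmax := uIcc_subset_Icc t₀.2 t.2 (uIoc_subset_uIcc hτ)
        rw [← dist_eq_norm, FunSpace.compProj_of_mem hτ, FunSpace.compProj_of_mem hτ]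
        exact ((hf.lipschitzOnWith τ hτ).dist_le_mul _ (hf.apply_mem_closedBall _ _) _
          (hf.apply_mem_closedBall _ _)).trans (by gcongr; exact ih ⟨τ, hτ⟩)
      _ = K ^ (n + 1) / n ! * dist α β * ∫ τ in uIoc t₀.1 t.1, |τ - t₀| ^ n := by
        rw [← integral_const_mul]
        congr 1 with τ
        ring
      _ = (K * |t.1 - t₀.1|) ^ (n + 1) / (n + 1) ! * dist α β := by
        rw [integral_pow_abs_sub_uIoc, Nat.factorial_succ]
        push_cast
        field_simp
        ring

lemma dist_iterate_next_le (hf : IsCaratheodory f t₀ x₀ a L K) (α β : FunSpace t₀ x₀ 0 L)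
    (n : ℕ) :
    dist (hf.next^[n] α) (hf.next^[n] β) ≤
      (K * max (tmax - t₀) (t₀ - tmin)) ^ n / n ! * dist α β := by
  have : 0 ≤ max (tmax - t₀) (t₀ - tmin) := le_max_of_le_left (sub_nonneg.2 t₀.2.2)
  refine (ContinuousMap.dist_le (by positivity)).2 fun t ↦
    (hf.dist_iterate_next_apply_le α β n t).trans ?_
  gcongr
  exact abs_sub_le_max_sub t.2.1 t.2.2 _

lemma exists_contractingWith_iterate_next (hf : IsCaratheodory f t₀ x₀ a L K) :
    ∃ (n : ℕ) (C : ℝ≥0), ContractingWith C hf.next^[n] := by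
  obtain ⟨n, hn⟩ := (FloorSemiring.tendsto_pow_div_factorial_atTop
    (K * max (tmax - t₀) (t₀ - tmin))).eventually (gt_mem_nhds zero_lt_one) |>.exists
  have : 0 ≤ max (tmax - t₀) (t₀ - tmin) := le_max_of_le_left (sub_nonneg.2 t₀.2.2)
  exact ⟨n, ⟨_, by positivity⟩, hn, LipschitzWith.of_dist_le_mul (hf.dist_iterate_next_le · · n)⟩

lemma exists_isFixedPt_next_eqOn (hf : IsCaratheodory f t₀ x₀ a L K)
    (hγ : ContinuousOn γ (Icc tmin tmax)) (hmem : MapsTo γ (Icc tmin tmax) (closedBall x₀ a))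
    (heq : ∀ t ∈ Icc tmin tmax, γ t = picard f t₀ x₀ γ t) :
    ∃ α : FunSpace t₀ x₀ 0 L, IsFixedPt hf.next α ∧ EqOn α.compProj γ (Icc tmin tmax) := by
  have hγI : (fun t : Icc tmin tmax ↦ γ t) = fun t : Icc tmin tmax ↦ picard f t₀ x₀ γ t :=
    funext fun t ↦ heq t t.2
  let α : FunSpace t₀ x₀ 0 L :=
    { toFun t := γ t
      lipschitzWith := hγI ▸ hf.lipschitzWith_picard hγ hmem
      mem_closedBall₀ := by simp [heq t₀ t₀.2] }
  have hα : EqOn α.compProj γ (Icc tmin tmax) := fun t ht ↦ FunSpace.compProj_of_mem ht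
  refine ⟨α, FunSpace.ext fun t ↦ ?_, hα⟩
  rw [next_apply, picard_congr (hα.mono (uIcc_subset_Icc t₀.2 t.2))]
  exact (heq t t.2).symm

theorem eqOn_of_eq_picard (hf : IsCaratheodory f t₀ x₀ a L K) {γ₁ γ₂ : ℝ → E}
    (hγ₁ : ContinuousOn γ₁ (Icc tmin tmax)) (hmem₁ : MapsTo γ₁ (Icc tmin tmax) (closedBall x₀ a))
    (heq₁ : ∀ t ∈ Icc tmin tmax, γ₁ t = picard f t₀ x₀ γ₁ t)
    (hγ₂ : ContinuousOn γ₂ (Icc tmin tmax)) (hmem₂ : MapsTo γ₂ (Icc tmin tmax) (closedBall x₀ a))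
    (heq₂ : ∀ t ∈ Icc tmin tmax, γ₂ t = picard f t₀ x₀ γ₂ t) :
    EqOn γ₁ γ₂ (Icc tmin tmax) := by
  obtain ⟨α₁, hfix₁, hα₁⟩ := hf.exists_isFixedPt_next_eqOn hγ₁ hmem₁ heq₁
  obtain ⟨α₂, hfix₂, hα₂⟩ := hf.exists_isFixedPt_next_eqOn hγ₂ hmem₂ heq₂
  obtain ⟨n, C, hC⟩ := hf.exists_contractingWith_iterate_next
  have h : α₁ = α₂ := hC.fixedPoint_unique' (hfix₁.iterate n) (hfix₂.iterate n)
  exact fun t ht ↦ by rw [← hα₁ ht, ← hα₂ ht, h]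

theorem exists_eq_picard [CompleteSpace E] (hf : IsCaratheodory f t₀ x₀ a L K) :
    ∃ γ : ℝ → E, Continuous γ ∧
      ∀ t ∈ Icc tmin tmax, γ t ∈ closedBall x₀ a ∧ γ t = picard f t₀ x₀ γ t := by
  obtain ⟨n, C, hC⟩ := hf.exists_contractingWith_iterate_next
  set α := ContractingWith.fixedPoint _ hC
  have hα : hf.next α = α := hC.isFixedPt_fixedPoint_iterate
  refine ⟨α.compProj, α.continuous_compProj, fun t ht ↦ ⟨hf.mapsTo_compProj α ht, ?_⟩⟩
  calc α.compProj t = hf.next α ⟨t, ht⟩ := by rw [hα, FunSpace.compProj_of_mem ht]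
    _ = picard f t₀ x₀ α.compProj t := rfl

end IsCaratheodory

end

theorem stmt4_general {E : Type*} [NormedAddCommGroup E] [NormedSpace ℝ E] [CompleteSpace E]
    (V : Set E) (Z : ℝ → E → E) (k c : ℝ) (hk : 0 < k) (hc : 0 < c)
    (J : Set ℝ) (t₀ T₀ r : ℝ) (hr : 0 < r) (hT₀ : 0 < T₀)
    (hJ : Set.Icc (t₀ - T₀) (t₀ + T₀) ⊆ J)
    (hmeas : ∀ x ∈ V,
      MeasureTheory.AEStronglyMeasurable (fun t => Z t x) (MeasureTheory.volume.restrict J))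
    (hbound : ∀ t ∈ J, ∀ x ∈ V, ‖Z t x‖ ≤ k * c)
    (hlip : ∀ t ∈ J, ∀ x ∈ V, ∀ y ∈ V, ‖Z t x - Z t y‖ ≤ k * c * ‖x - y‖)
    (x₀ : E) (hball : Metric.closedBall x₀ (2 * r) ⊆ V)
    (x : E) (hx : x ∈ Metric.ball x₀ (r - k * c * T₀)) :
    ∃ f : ℝ → E,
      (ContinuousOn f (Set.Icc (t₀ - T₀) (t₀ + T₀)) ∧
        ∀ t ∈ Set.Icc (t₀ - T₀) (t₀ + T₀),
          f t ∈ V ∧ f t = x + ∫ s in t₀..t, Z s (f s)) ∧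
      ∀ g : ℝ → E,
        (ContinuousOn g (Set.Icc (t₀ - T₀) (t₀ + T₀)) ∧
          ∀ t ∈ Set.Icc (t₀ - T₀) (t₀ + T₀),
            g t ∈ V ∧ g t = x + ∫ s in t₀..t, Z s (g s)) →
        ∀ t ∈ Set.Icc (t₀ - T₀) (t₀ + T₀), g t = f t := by
  have hkc : 0 ≤ k * c := (mul_pos hk hc).le
  have ht₀ : t₀ ∈ Icc (t₀ - T₀) (t₀ + T₀) := ⟨by linarith, by linarith⟩
  have hsub : closedBall x (k * c * T₀) ⊆ V := fun y hy ↦ hball <| by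
    rw [mem_ball] at hx
    rw [mem_closedBall] at hy ⊢
    linarith [dist_triangle y x x₀]
  have hf : IsCaratheodory Z (⟨t₀, ht₀⟩ : Icc _ _) x ⟨k * c * T₀, mul_nonneg hkc hT₀.le⟩
      ⟨k * c, hkc⟩ ⟨k * c, hkc⟩ :=
    { lipschitzOnWith := fun t ht ↦ LipschitzOnWith.of_dist_le_mul fun y hy z hz ↦ by
        rw [dist_eq_norm, dist_eq_norm]
        exact hlip t (hJ ht) y (hsub hy) z (hsub hz)
      aestronglyMeasurable := fun y hy ↦
        (hmeas y (hsub hy)).mono_measure (Measure.restrict_mono hJ le_rfl)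
      norm_le := fun t ht y hy ↦ hbound t (hJ ht) y (hsub hy)
      mul_max_le := by
        simp only [add_sub_cancel_left, sub_sub_cancel, max_self]
        exact le_rfl }
  obtain ⟨γ, hγc, hγ⟩ := hf.exists_eq_picard
  refine ⟨γ, ⟨hγc.continuousOn, fun t ht ↦ ⟨hsub (hγ t ht).1, (hγ t ht).2⟩⟩, ?_⟩
  rintro g ⟨hgc, hg⟩
  have hgball := mapsTo_closedBall_of_eq_picard (fun t ht ↦ hbound t (hJ ht) _ (hg t ht).1)
    fun t ht ↦ (hg t ht).2
  exact hf.eqOn_of_eq_picard hgc hgball (fun t ht ↦ (hg t ht).2) hγc.continuousOn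
    (fun t ht ↦ (hγ t ht).1) fun t ht ↦ (hγ t ht).2

/-- Carathéodory existence and uniqueness of integral curves of a
time-dependent vector field `Z` which is measurable in `t`, bounded by `k*c` and
`k*c`-Lipschitz in `x`. -/
theorem stmt4 {E : Type*} [NormedAddCommGroup E] [NormedSpace ℝ E] [CompleteSpace E]
    (V : Set E) (hV : IsOpen V) (Z : ℝ → E → E) (k c : ℝ) (hk : 0 < k) (hc : 0 < c)
    (J : Set ℝ) (t₀ T₀ r : ℝ) (hr : 0 < r) (hT₀ : 0 < T₀)
    (hJ : Set.Icc (t₀ - T₀) (t₀ + T₀) ⊆ J)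
    (hmeas : ∀ x ∈ V,
      MeasureTheory.AEStronglyMeasurable (fun t => Z t x) (MeasureTheory.volume.restrict J))
    (hbound : ∀ t ∈ J, ∀ x ∈ V, ‖Z t x‖ ≤ k * c)
    (hlip : ∀ t ∈ J, ∀ x ∈ V, ∀ y ∈ V, ‖Z t x - Z t y‖ ≤ k * c * ‖x - y‖)
    (x₀ : E) (hball : Metric.closedBall x₀ (2 * r) ⊆ V)
    (hT : T₀ < r / (k * c)) (x : E) (hx : x ∈ Metric.ball x₀ (r - k * c * T₀)) :
    ∃ f : ℝ → E,
      (ContinuousOn f (Set.Icc (t₀ - T₀) (t₀ + T₀)) ∧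
        ∀ t ∈ Set.Icc (t₀ - T₀) (t₀ + T₀),
          f t ∈ V ∧ f t = x + ∫ s in t₀..t, Z s (f s)) ∧
      ∀ g : ℝ → E,
        (ContinuousOn g (Set.Icc (t₀ - T₀) (t₀ + T₀)) ∧
          ∀ t ∈ Set.Icc (t₀ - T₀) (t₀ + T₀),
            g t ∈ V ∧ g t = x + ∫ s in t₀..t, Z s (g s)) →
        ∀ t ∈ Set.Icc (t₀ - T₀) (t₀ + T₀), g t = f t :=
  stmt4_general V Z k c hk hc J t₀ T₀ r hr hT₀ hJ hmeas hbound hlip x₀ hball x hx
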